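/- The Kolmogorov (uniform) distance between δ_n (Dirac at the integer n ≥ 1) and the Poisson distribution with mean n is bounded below by an absolute constant: ρ(δ_n, Poisson(n)) ≥ 1/4 for all n ≥ 1. -/

import Mathlib

open MeasureTheory

/-- The Kolmogorov (uniform) distance between measures on `ℝ`. -/
noncomputable def kolmDist (F H : Measure ℝ) : ℝ :=
  ⨆ x : ℝ, |(F (Set.Iic x)).toReal - (H (Set.Iic x)).toReal|

/-- Poisson distribution with mean `lam` as a measure on `ℝ`. -/
noncomputable def poissonReal (lam : ℝ) : Measure ℝ :=
  Measure.sum fun (k : ℕ) =>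
    (ENNReal.ofReal (Real.exp (-lam) * lam ^ k / k.factorial)) • Measure.dirac (k : ℝ)

lemma poissonReal_apply (lam : ℝ) {s : Set ℝ} (hs : MeasurableSet s) :
    poissonReal lam s = ∑' k : ℕ,
      ENNReal.ofReal (Real.exp (-lam) * lam ^ k / k.factorial) * s.indicator 1 (k : ℝ) := by
  rw [poissonReal, Measure.sum_apply _ hs]
  simp_rw [Measure.smul_apply, smul_eq_mul, Measure.dirac_apply' _ hs]

lemma poissonReal_univ (n : ℕ) : poissonReal (n : ℝ) Set.univ = 1 := by
  rw [poissonReal_apply _ MeasurableSet.univ]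
  simp only [Set.indicator_univ, Pi.one_apply, mul_one]
  have h := ProbabilityTheory.poissonPMFRealSum (n : NNReal)
  have hnn : ∀ k : ℕ, 0 ≤ ProbabilityTheory.poissonPMFReal (n : NNReal) k :=
    fun k => ProbabilityTheory.poissonPMFReal_nonneg
  have := ENNReal.ofReal_tsum_of_nonneg hnn h.summable
  simp only [ProbabilityTheory.poissonPMFReal] at this
  rw [h.tsum_eq] at this
  simp only [ProbabilityTheory.poissonPMFReal, NNReal.coe_natCast] at this
  rw [← this]
  norm_num

/-- The Poisson probability at `n` is at most `1/2` for `n ≥ 1`. -/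
lemma poisson_central_le_half (n : ℕ) (hn : 1 ≤ n) :
    Real.exp (-(n : ℝ)) * (n : ℝ) ^ n / n.factorial ≤ 1 / 2 := by
  obtain ⟨m, rfl⟩ : ∃ m, n = m + 1 := ⟨n - 1, by omega⟩
  set N : ℕ := m + 1
  have hfac : (0 : ℝ) < N.factorial := by positivity
  have hkey : 2 * ((N : ℝ) ^ N / N.factorial) ≤ Real.exp N := by
    have hsub : ({m, m + 1} : Finset ℕ) ⊆ Finset.range (N + 1) := by
      intro x hx
      simp only [Finset.mem_insert, Finset.mem_singleton] at hx
      rcases hx with rfl | rfl <;> simp [N] <;> omega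
    have hsum : ∑ i ∈ ({m, m + 1} : Finset ℕ), (N : ℝ) ^ i / i.factorial
        ≤ ∑ i ∈ Finset.range (N + 1), (N : ℝ) ^ i / i.factorial := by
      apply Finset.sum_le_sum_of_subset_of_nonneg hsub
      intro i _ _
      positivity
    have hexp : ∑ i ∈ Finset.range (N + 1), (N : ℝ) ^ i / i.factorial ≤ Real.exp N :=
      Real.sum_le_exp_of_nonneg (by positivity) _
    have hpair : ∑ i ∈ ({m, m + 1} : Finset ℕ), (N : ℝ) ^ i / i.factorial
        = (N : ℝ) ^ m / m.factorial + (N : ℝ) ^ (m + 1) / (m + 1).factorial := by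
      rw [Finset.sum_pair (by omega)]
    have heq : (N : ℝ) ^ m / m.factorial = (N : ℝ) ^ (m + 1) / (m + 1).factorial := by
      rw [Nat.factorial_succ, pow_succ]
      have hm : (0 : ℝ) < m.factorial := by positivity
      field_simp
      push_cast
      rw [show ((N : ℕ) : ℝ) = (m : ℝ) + 1 by simp [N]]; ring
    calc 2 * ((N : ℝ) ^ N / N.factorial)
        = (N : ℝ) ^ m / m.factorial + (N : ℝ) ^ (m + 1) / (m + 1).factorial := by
          rw [heq]; simp only [N]; ring
      _ ≤ Real.exp N := hpair ▸ (hsum.trans hexp)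
  have hexp_pos : (0 : ℝ) < Real.exp (N : ℝ) := Real.exp_pos _
  rw [Real.exp_neg, div_le_div_iff₀ (by positivity) (by norm_num)]
  calc (Real.exp (N : ℝ))⁻¹ * (N : ℝ) ^ N * 2
      = 2 * ((N : ℝ) ^ N) / Real.exp N := by
        field_simp
    _ ≤ 1 * (N.factorial : ℝ) := by
        rw [div_le_iff₀ hexp_pos, one_mul]
        calc 2 * (N : ℝ) ^ N = 2 * ((N : ℝ) ^ N / N.factorial) * N.factorial := by
              field_simp
          _ ≤ Real.exp N * N.factorial :=
              mul_le_mul_of_nonneg_right hkey (le_of_lt hfac)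
          _ = N.factorial * Real.exp N := by ring

theorem kolmDist_dirac_poisson_lower (n : ℕ) (hn : 1 ≤ n) :
    (1 : ℝ) / 4 ≤ kolmDist (Measure.dirac (n : ℝ)) (poissonReal n) := by
  classical
  set pk : ℕ → ENNReal :=
    fun k => ENNReal.ofReal (Real.exp (-(n : ℝ)) * (n : ℝ) ^ k / k.factorial) with hpk
  -- values of poissonReal on Iic sets
  have happly : ∀ x : ℝ, poissonReal (n : ℝ) (Set.Iic x)
      = ∑' k : ℕ, (if (k : ℝ) ≤ x then pk k else 0) := by
    intro x
    rw [poissonReal_apply _ measurableSet_Iic]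
    congr 1
    ext k
    by_cases h : (k : ℝ) ≤ x
    · simp [Set.indicator_of_mem, Set.mem_Iic.mpr h, h, hpk]
    · simp [Set.indicator_of_notMem, h, hpk]
  set A : ENNReal := poissonReal (n : ℝ) (Set.Iic ((n : ℝ) - 1/2)) with hA
  set B : ENNReal := poissonReal (n : ℝ) (Set.Iic (n : ℝ)) with hB
  -- B = A + pk n
  have hBA : B = A + pk n := by
    rw [hA, hB, happly, happly]
    have hterm : ∀ k : ℕ, (if (k : ℝ) ≤ (n : ℝ) then pk k else 0)
        = (if (k : ℝ) ≤ (n : ℝ) - 1/2 then pk k else 0) + (if k = n then pk n else 0) := by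
      intro k
      rcases lt_trichotomy k n with h | rfl | h
      · have h1 : (k : ℝ) ≤ (n : ℝ) := by exact_mod_cast h.le
        have h2 : (k : ℝ) ≤ (n : ℝ) - 1/2 := by
          have : (k : ℝ) + 1 ≤ (n : ℝ) := by exact_mod_cast h
          linarith
        rw [if_pos h1, if_pos h2, if_neg (Nat.ne_of_lt h), add_zero]
      · have h2 : ¬ ((k : ℝ) ≤ (k : ℝ) - 1/2) := by norm_num
        rw [if_pos le_rfl, if_neg h2, if_pos rfl, zero_add]
      · have h1 : ¬ ((k : ℝ) ≤ (n : ℝ)) := by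
          push_neg; exact_mod_cast h
        have h2 : ¬ ((k : ℝ) ≤ (n : ℝ) - 1/2) := by
          push_neg
          have : (n : ℝ) < k := by exact_mod_cast h
          linarith
        rw [if_neg h1, if_neg h2, if_neg (by omega : k ≠ n), add_zero]
    simp_rw [hterm]
    rw [ENNReal.tsum_add, tsum_ite_eq]
  have hBle : B ≤ 1 := by
    rw [hB, ← poissonReal_univ n]
    exact measure_mono (Set.subset_univ _)
  have hAle : A ≤ 1 := le_trans (hBA ▸ le_add_right le_rfl : A ≤ B) hBle
  have hAne : A ≠ ⊤ := ne_top_of_le_ne_top ENNReal.one_ne_top hAle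
  have hBne : B ≠ ⊤ := ne_top_of_le_ne_top ENNReal.one_ne_top hBle
  -- real values
  set a : ℝ := A.toReal with ha
  set b : ℝ := B.toReal with hb
  have hp_nonneg : 0 ≤ Real.exp (-(n : ℝ)) * (n : ℝ) ^ n / n.factorial := by positivity
  have hb_eq : b = a + Real.exp (-(n : ℝ)) * (n : ℝ) ^ n / n.factorial := by
    rw [hb, hBA, ENNReal.toReal_add hAne (by simp [hpk]), ha, hpk,
      ENNReal.toReal_ofReal hp_nonneg]
  have hb_le : b ≤ 1 := by
    rw [hb]
    exact ENNReal.toReal_le_of_le_ofReal zero_le_one (by simpa using hBle)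
  have ha_nonneg : 0 ≤ a := ENNReal.toReal_nonneg
  have hp_half : Real.exp (-(n : ℝ)) * (n : ℝ) ^ n / n.factorial ≤ 1 / 2 :=
    poisson_central_le_half n hn
  -- dirac values
  have hd1 : (Measure.dirac (n : ℝ) (Set.Iic ((n : ℝ) - 1/2))).toReal = 0 := by
    rw [Measure.dirac_apply' _ measurableSet_Iic]
    have : (n : ℝ) ∉ Set.Iic ((n : ℝ) - 1/2) := by
      simp only [Set.mem_Iic]; push_neg; linarith
    simp [Set.indicator_of_notMem this]
  have hd2 : (Measure.dirac (n : ℝ) (Set.Iic (n : ℝ))).toReal = 1 := by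
    rw [Measure.dirac_apply' _ measurableSet_Iic]
    simp [Set.indicator_of_mem (Set.mem_Iic.mpr le_rfl)]
  -- boundedness of the sup family
  have hbdd : BddAbove (Set.range fun x : ℝ =>
      |((Measure.dirac (n : ℝ)) (Set.Iic x)).toReal - (poissonReal (n : ℝ) (Set.Iic x)).toReal|) := by
    refine ⟨1, ?_⟩
    rintro _ ⟨x, rfl⟩
    have hdx : ((Measure.dirac (n : ℝ)) (Set.Iic x)).toReal ≤ 1 := by
      rw [Measure.dirac_apply' _ measurableSet_Iic]
      by_cases h : (n : ℝ) ∈ Set.Iic x <;> simp [h]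
    have hdx0 : 0 ≤ ((Measure.dirac (n : ℝ)) (Set.Iic x)).toReal := ENNReal.toReal_nonneg
    have hpx : (poissonReal (n : ℝ) (Set.Iic x)).toReal ≤ 1 := by
      refine ENNReal.toReal_le_of_le_ofReal zero_le_one ?_
      have h := measure_mono (μ := poissonReal (n : ℝ)) (Set.subset_univ (Set.Iic x))
      rw [poissonReal_univ] at h
      simpa using h
    have hpx0 : 0 ≤ (poissonReal (n : ℝ) (Set.Iic x)).toReal := ENNReal.toReal_nonneg
    rw [abs_sub_le_iff]
    constructor <;> linarith
  -- two lower bounds for kolmDist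
  have h1 : a ≤ kolmDist (Measure.dirac (n : ℝ)) (poissonReal n) := by
    have := le_ciSup hbdd ((n : ℝ) - 1/2)
    rw [hd1] at this
    calc a = |0 - a| := by rw [zero_sub, abs_neg, abs_of_nonneg ha_nonneg]
      _ ≤ _ := by exact this
  have h2 : 1 - b ≤ kolmDist (Measure.dirac (n : ℝ)) (poissonReal n) := by
    have := le_ciSup hbdd (n : ℝ)
    rw [hd2] at this
    calc 1 - b = |1 - b| := (abs_of_nonneg (by linarith)).symm
      _ ≤ _ := by exact this
  -- combine
  by_cases hcase : (1 : ℝ)/4 ≤ a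
  · linarith
  · push_neg at hcase
    have : 1/4 ≤ 1 - b := by rw [hb_eq]; linarith
    linarith
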